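/- Let k and M be positive integers and let B₁, …, B_M : Finset (Finset (Fin k)) be families of subsets of Fin k, each of which is closed under erasing elements (for every s ∈ B_i and every j ∈ Fin k, s.erase j ∈ B_i). If p ∈ Q(∏_{i=1}^M B_i) and q : Fin k → ℕ satisfies q(l) ≤ p(l) for every l ∈ Fin k, then q ∈ Q(∏_{i=1}^M B_i). -/
import Mathlib


/-- The sumset `Q(∏ᵢ Bᵢ)`: the set of all vectors `p : Fin k → ℕ` of the form
`p l = #{i : l ∈ bᵢ}` for some choice `bᵢ ∈ Bᵢ` (identifying `{0,1}^k` with the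
powerset of `Fin k`). -/
def Qset {k M : ℕ} (B : Fin M → Finset (Finset (Fin k))) : Finset (Fin k → ℕ) :=
  (Fintype.piFinset B).image fun b l => (Finset.univ.filter fun i => l ∈ b i).card

lemma Qset.step {k M : ℕ} (B : Fin M → Finset (Finset (Fin k)))
    (hB : ∀ i, ∀ s ∈ B i, ∀ j : Fin k, s.erase j ∈ B i)
    (p : Fin k → ℕ) (hp : p ∈ Qset B) (l : Fin k) (hl : 0 < p l) :
    Function.update p l (p l - 1) ∈ Qset B := by
  simp only [Qset, Finset.mem_image] at hp ⊢
  obtain ⟨b, hb, rfl⟩ := hp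
  have hex : ∃ i, l ∈ b i := by
    by_contra h; push_neg at h
    simp only at hl
    rw [Finset.filter_eq_empty_iff.mpr (fun i _ => h i)] at hl
    simp at hl
  obtain ⟨i₀, hi₀⟩ := hex
  refine ⟨Function.update b i₀ ((b i₀).erase l), ?_, ?_⟩
  · rw [Fintype.mem_piFinset] at hb ⊢
    intro i
    by_cases h : i = i₀
    · subst h; simpa using hB _ _ (hb i) l
    · simpa [Function.update_of_ne h] using hb i
  · funext l'
    by_cases hl' : l' = l
    · subst hl'
      rw [Function.update_self]
      have hset : (Finset.univ.filter fun i => l' ∈ Function.update b i₀ ((b i₀).erase l') i)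
          = (Finset.univ.filter fun i => l' ∈ b i).erase i₀ := by
        ext i
        by_cases h : i = i₀ <;>
          simp [h, Function.update_of_ne, Finset.mem_erase]
      rw [hset, Finset.card_erase_of_mem (by simp [hi₀])]
    · have hset : (Finset.univ.filter fun i => l' ∈ Function.update b i₀ ((b i₀).erase l) i)
          = Finset.univ.filter fun i => l' ∈ b i := by
        ext i
        by_cases h : i = i₀ <;>
          simp [h, Function.update_of_ne, Finset.mem_erase, hl']
      rw [Function.update_of_ne hl', hset]

lemma Qset.down {k M : ℕ} (B : Fin M → Finset (Finset (Fin k)))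
    (hB : ∀ i, ∀ s ∈ B i, ∀ j : Fin k, s.erase j ∈ B i) :
    ∀ n (p : Fin k → ℕ), ∑ l, p l = n → p ∈ Qset B →
      ∀ q : Fin k → ℕ, (∀ l, q l ≤ p l) → q ∈ Qset B := by
  intro n
  induction n using Nat.strong_induction_on with
  | _ n ih =>
    intro p hsum hp q hq
    by_cases hqp : q = p
    · subst hqp; exact hp
    · have hex : ∃ l, q l < p l := by
        by_contra h; push_neg at h
        exact hqp (funext fun l => le_antisymm (hq l) (h l))
      obtain ⟨l, hl⟩ := hex
      have hpl : 0 < p l := lt_of_le_of_lt (Nat.zero_le _) hl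
      have hp' := Qset.step B hB p hp l hpl
      have hsum' : ∑ l', Function.update p l (p l - 1) l' < n := by
        rw [Finset.sum_update_of_mem (Finset.mem_univ l), Finset.sdiff_singleton_eq_erase]
        rw [← hsum, ← Finset.sum_erase_add _ _ (Finset.mem_univ l)]
        omega
      refine ih _ hsum' _ rfl hp' q fun l' => ?_
      by_cases h : l' = l
      · subst h; rw [Function.update_self]; omega
      · rw [Function.update_of_ne h]; exact hq l'

/-- Lemma 7.6: if each family `Bᵢ` is closed under erasing elements, then the
sumset `Q(∏ᵢ Bᵢ)` is downward closed: any `q` dominated componentwise by some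
`p ∈ Q(∏ᵢ Bᵢ)` also lies in `Q(∏ᵢ Bᵢ)`. -/
theorem stmt_8 (k M : ℕ) (hk : 0 < k) (hM : 0 < M)
    (B : Fin M → Finset (Finset (Fin k)))
    (hB : ∀ i, ∀ s ∈ B i, ∀ j : Fin k, s.erase j ∈ B i)
    (p : Fin k → ℕ) (hp : p ∈ Qset B)
    (q : Fin k → ℕ) (hq : ∀ l, q l ≤ p l) :
    q ∈ Qset B :=
  Qset.down B hB _ p rfl hp q hq
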